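/- arXiv:1507.08987 — 2 statements merged into one kernel-verified Lean document; each statement's English description precedes it below -/
import Mathlib

section
/- Let (X, d, ≤) be an ordered metric space with (X, d) complete, and let f, g be self-maps on X such that: (i) f(X) ⊆ g(X); (ii) f is g-comparable; (iii) the pair (f, g) is compatible; (iv) g is continuous; (v) either f is continuous or (X, d, ≤) has the g-TCC property; (vi) there exists x₀ ∈ X with g(x₀) ≺≻ f(x₀); (vii) there exists α ∈ [0,1) such that d(f(x), f(y)) ≤ α·d(g(x), g(y)) for all x, y ∈ X with g(x) ≺≻ g(y). If in addition (X, ≤) is (f, g)-directed, then f and g have a unique common fixed point. -/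
open Filter Topology

section

variable {X : Type*} [MetricSpace X] [PartialOrder X]

/-- Two elements of an ordered set are comparable. -/
def Cmp (x y : X) : Prop := x ≤ y ∨ y ≤ x

/-- `f` is `g`-comparable: `g x ≺≻ g y` implies `f x ≺≻ f y`. -/
def GComparable (f g : X → X) : Prop :=
  ∀ x y : X, Cmp (g x) (g y) → Cmp (f x) (f y)

/-- The `g`-TCC property of an ordered metric space. -/
def GTCC (g : X → X) : Prop :=
  ∀ (x : ℕ → X) (l : X), (∀ n, Cmp (x n) (x (n + 1))) →
    Tendsto x atTop (𝓝 l) →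
      ∃ φ : ℕ → ℕ, StrictMono φ ∧ ∀ k, Cmp (g (x (φ k))) (g l)

/-- The TCC property of a subset of an ordered metric space. -/
def TCCOn (Y : Set X) : Prop :=
  ∀ (x : ℕ → X), (∀ n, x n ∈ Y) → ∀ l ∈ Y, (∀ n, Cmp (x n) (x (n + 1))) →
    Tendsto x atTop (𝓝 l) →
      ∃ φ : ℕ → ℕ, StrictMono φ ∧ ∀ k, Cmp (x (φ k)) l

/-- The TCC property of an ordered metric space. -/
def TCC (X : Type*) [MetricSpace X] [PartialOrder X] : Prop :=
  ∀ (x : ℕ → X) (l : X), (∀ n, Cmp (x n) (x (n + 1))) →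
    Tendsto x atTop (𝓝 l) →
      ∃ φ : ℕ → ℕ, StrictMono φ ∧ ∀ k, Cmp (x (φ k)) l

/-- The pair `(f, g)` is compatible. -/
def Compatible (f g : X → X) : Prop :=
  ∀ (x : ℕ → X) (l : X), Tendsto (fun n => g (x n)) atTop (𝓝 l) →
    Tendsto (fun n => f (x n)) atTop (𝓝 l) →
      Tendsto (fun n => dist (g (f (x n))) (f (g (x n)))) atTop (𝓝 0)

/-- `f` is `g`-continuous. -/
def GContinuous (f g : X → X) : Prop :=
  ∀ (x : ℕ → X) (a : X), Tendsto (fun n => g (x n)) atTop (𝓝 (g a)) →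
    Tendsto (fun n => f (x n)) atTop (𝓝 (f a))

/-- There exists a `≺≻`-chain between `a` and `b` inside `E`. -/
def ChainIn (E : Set X) (a b : X) : Prop :=
  ∃ (k : ℕ) (e : ℕ → X), 2 ≤ k ∧ (∀ i < k, e i ∈ E) ∧ e 0 = a ∧ e (k - 1) = b ∧
    ∀ i, i + 1 < k → Cmp (e i) (e (i + 1))

end

/-! The Jungck iteration `g (u (n+1)) = f (u n)` from `x₀` stays termwise comparable, and the
contraction makes `g ∘ u` Cauchy, with limit `z`. Compatibility and continuity of `g` give
`f (g (u n)) → g z`, while either continuity of `f` or the `g`-TCC property gives a subsequence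
of `f (g (u n))` tending to `f z`; hence `z` is a coincidence point. Two coincidence points are
joined through a common comparable `g c`, and the Jungck iterations from `c` converge to both
coincidence values, so the point of coincidence is unique. Compatible maps commute at coincidence
points, which makes this point of coincidence a common fixed point. -/

section

variable {X : Type*} {f g : X → X}

def IsJungckOrbit (f g : X → X) (u : ℕ → X) : Prop :=
  ∀ n, g (u (n + 1)) = f (u n)

theorem IsJungckOrbit.const {a : X} (ha : f a = g a) : IsJungckOrbit f g fun _ => a :=
  fun _ => ha.symm

theorem IsJungckOrbit.shift {u : ℕ → X} (hu : IsJungckOrbit f g u) :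
    IsJungckOrbit f g fun n => u (n + 1) :=
  fun n => hu (n + 1)

theorem exists_isJungckOrbit (h : Set.range f ⊆ Set.range g) (x₀ : X) :
    ∃ u : ℕ → X, u 0 = x₀ ∧ IsJungckOrbit f g u := by
  choose T hT using fun x => h (Set.mem_range_self x)
  exact ⟨fun n => T^[n] x₀, rfl, fun n => by simp only [Function.iterate_succ_apply', hT]⟩

theorem existsUnique_common_fixedPoint {z : X} (hz : f z = g z)
    (hcomm : ∀ a, f a = g a → g (f a) = f (g a))
    (huniq : ∀ a b, f a = g a → f b = g b → f a = f b) :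
    ∃! x, g x = x ∧ f x = x := by
  have hw : f (f z) = g (f z) := by rw [hcomm z hz, hz]
  have hfw : f (f z) = f z := huniq _ _ hw hz
  refine ⟨f z, ⟨hw ▸ hfw, hfw⟩, fun y ⟨hgy, hfy⟩ => ?_⟩
  have := huniq y (f z) (hfy.trans hgy.symm) hw
  rwa [hfy, hfw] at this

end

section

variable {X : Type*} [PartialOrder X] {f g : X → X}

theorem IsJungckOrbit.cmp {u v : ℕ → X} (hu : IsJungckOrbit f g u) (hv : IsJungckOrbit f g v)
    (hfg : GComparable f g) (h₀ : Cmp (g (u 0)) (g (v 0))) (n : ℕ) :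
    Cmp (g (u n)) (g (v n)) := by
  induction n with
  | zero => exact h₀
  | succ n ih => rw [hu n, hv n]; exact hfg _ _ ih

end

section

variable {X : Type*} [MetricSpace X] {f g : X → X}

theorem IsJungckOrbit.tendsto_apply {u : ℕ → X} {z : X} (hu : IsJungckOrbit f g u)
    (hz : Tendsto (fun n => g (u n)) atTop (𝓝 z)) :
    Tendsto (fun n => f (u n)) atTop (𝓝 z) := by
  have hshift : (fun n => f (u n)) = fun n => g (u (n + 1)) := funext fun n => (hu n).symm
  rw [hshift]
  exact hz.comp (tendsto_add_atTop_nat 1)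

theorem Compatible.commute_of_coincidence (h : Compatible f g) {a : X} (ha : f a = g a) :
    g (f a) = f (g a) := by
  have hlim := h (fun _ => a) (g a) tendsto_const_nhds (by rw [ha]; exact tendsto_const_nhds)
  exact dist_eq_zero.mp (tendsto_nhds_unique tendsto_const_nhds hlim)

theorem Compatible.tendsto_apply_comp {u : ℕ → X} {z : X} (h : Compatible f g)
    (hg : Continuous g) (hgu : Tendsto (fun n => g (u n)) atTop (𝓝 z))
    (hfu : Tendsto (fun n => f (u n)) atTop (𝓝 z)) :
    Tendsto (fun n => f (g (u n))) atTop (𝓝 (g z)) := by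
  have hgf : Tendsto (fun n => g (f (u n))) atTop (𝓝 (g z)) := (hg.tendsto z).comp hfu
  refine tendsto_iff_dist_tendsto_zero.mpr (squeeze_zero (fun _ => dist_nonneg)
    (fun n => dist_triangle (f (g (u n))) (g (f (u n))) (g z)) ?_)
  simpa [dist_comm] using (h u z hgu hfu).add (tendsto_iff_dist_tendsto_zero.mp hgf)

end

section

variable {X : Type*} [MetricSpace X] [PartialOrder X] {f g : X → X}

def IsGContraction (f g : X → X) (α : ℝ) : Prop :=
  ∀ x y, Cmp (g x) (g y) → dist (f x) (f y) ≤ α * dist (g x) (g y)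

theorem IsJungckOrbit.dist_le {u v : ℕ → X} {α : ℝ} (hu : IsJungckOrbit f g u)
    (hv : IsJungckOrbit f g v) (hfg : GComparable f g) (hα : 0 ≤ α) (hc : IsGContraction f g α)
    (h₀ : Cmp (g (u 0)) (g (v 0))) (n : ℕ) :
    dist (g (u n)) (g (v n)) ≤ dist (g (u 0)) (g (v 0)) * α ^ n := by
  induction n with
  | zero => simp
  | succ n ih =>
    calc dist (g (u (n + 1))) (g (v (n + 1)))
        = dist (f (u n)) (f (v n)) := by rw [hu n, hv n]
      _ ≤ α * dist (g (u n)) (g (v n)) := hc _ _ (hu.cmp hv hfg h₀ n)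
      _ ≤ α * (dist (g (u 0)) (g (v 0)) * α ^ n) := by gcongr
      _ = dist (g (u 0)) (g (v 0)) * α ^ (n + 1) := by ring

theorem IsJungckOrbit.cauchySeq {u : ℕ → X} {α : ℝ} (hu : IsJungckOrbit f g u)
    (hfg : GComparable f g) (hα₀ : 0 ≤ α) (hα₁ : α < 1) (hc : IsGContraction f g α)
    (h₀ : Cmp (g (u 0)) (g (u 1))) :
    CauchySeq fun n => g (u n) :=
  cauchySeq_of_le_geometric α _ hα₁ (hu.dist_le hu.shift hfg hα₀ hc h₀)

theorem IsJungckOrbit.tendsto_of_coincidence {u : ℕ → X} {α : ℝ} {a : X}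
    (hu : IsJungckOrbit f g u) (hfg : GComparable f g) (hα₀ : 0 ≤ α) (hα₁ : α < 1)
    (hc : IsGContraction f g α) (ha : f a = g a) (h₀ : Cmp (g (u 0)) (g a)) :
    Tendsto (fun n => g (u n)) atTop (𝓝 (g a)) := by
  rw [tendsto_iff_dist_tendsto_zero]
  refine squeeze_zero (fun _ => dist_nonneg)
    (hu.dist_le (IsJungckOrbit.const ha) hfg hα₀ hc h₀) ?_
  simpa using (tendsto_pow_atTop_nhds_zero_of_lt_one hα₀ hα₁).const_mul (dist (g (u 0)) (g a))

theorem eq_of_coincidence_of_directed {α : ℝ} (hrange : Set.range f ⊆ Set.range g)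
    (hfg : GComparable f g) (hα₀ : 0 ≤ α) (hα₁ : α < 1) (hc : IsGContraction f g α)
    (hdir : ∀ x y : X, ∃ z : X, Cmp (f x) (g z) ∧ Cmp (f y) (g z))
    {a b : X} (ha : f a = g a) (hb : f b = g b) : f a = f b := by
  obtain ⟨c, hac, hbc⟩ := hdir a b
  obtain ⟨u, hu₀, hu⟩ := exists_isJungckOrbit hrange c
  have cmp_start {x : X} (hx : f x = g x) (hxc : Cmp (f x) (g c)) : Cmp (g (u 0)) (g x) := by
    rw [hu₀, ← hx]
    exact hxc.symm
  rw [ha, hb]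
  exact tendsto_nhds_unique (hu.tendsto_of_coincidence hfg hα₀ hα₁ hc ha (cmp_start ha hac))
    (hu.tendsto_of_coincidence hfg hα₀ hα₁ hc hb (cmp_start hb hbc))

theorem IsGContraction.tendsto_apply {α : ℝ} (hc : IsGContraction f g α) {v : ℕ → X} {z : X}
    (hv : Tendsto (fun n => g (v n)) atTop (𝓝 (g z))) (hvz : ∀ n, Cmp (g (v n)) (g z)) :
    Tendsto (fun n => f (v n)) atTop (𝓝 (f z)) := by
  refine tendsto_iff_dist_tendsto_zero.mpr (squeeze_zero (fun _ => dist_nonneg)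
    (fun n => hc _ _ (hvz n)) ?_)
  simpa using (tendsto_iff_dist_tendsto_zero.mp hv).const_mul α

theorem exists_coincidence [CompleteSpace X] {α : ℝ} (hrange : Set.range f ⊆ Set.range g)
    (hfg : GComparable f g) (hcompat : Compatible f g) (hg : Continuous g)
    (hcont : Continuous f ∨ GTCC g) {x₀ : X} (hx₀ : Cmp (g x₀) (f x₀))
    (hα₀ : 0 ≤ α) (hα₁ : α < 1) (hc : IsGContraction f g α) :
    ∃ z, f z = g z := by
  obtain ⟨u, hu₀, hu⟩ := exists_isJungckOrbit hrange x₀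
  have hmono : ∀ n, Cmp (g (u n)) (g (u (n + 1))) :=
    hu.cmp hu.shift hfg (by rw [hu 0, hu₀]; exact hx₀)
  obtain ⟨z, hz⟩ := cauchySeq_tendsto_of_complete (hu.cauchySeq hfg hα₀ hα₁ hc (hmono 0))
  have hfgu := hcompat.tendsto_apply_comp hg hz (hu.tendsto_apply hz)
  refine ⟨z, ?_⟩
  rcases hcont with hf | htcc
  · exact tendsto_nhds_unique ((hf.tendsto z).comp hz) hfgu
  · obtain ⟨φ, hφ, hφz⟩ := htcc (fun n => g (u n)) z hmono hz
    have hggu : Tendsto (fun k => g (g (u (φ k)))) atTop (𝓝 (g z)) :=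
      (hg.tendsto z).comp (hz.comp hφ.tendsto_atTop)
    exact tendsto_nhds_unique (hc.tendsto_apply hggu hφz) (hfgu.comp hφ.tendsto_atTop)

end

/-- Corollary 4.7 with (u₀²) : `(X, ≤)` is `(f,g)`-directed, unique common
fixed point. -/
theorem stmt11 {X : Type*} [MetricSpace X] [PartialOrder X] [CompleteSpace X]
    (f g : X → X)
    (h1 : Set.range f ⊆ Set.range g)
    (h2 : GComparable f g)
    (h3 : Compatible f g)
    (h4 : Continuous g)
    (h5 : Continuous f ∨ GTCC g)
    (h6 : ∃ x₀ : X, Cmp (g x₀) (f x₀))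
    (h7 : ∃ α : ℝ, 0 ≤ α ∧ α < 1 ∧
      ∀ x y : X, Cmp (g x) (g y) → dist (f x) (f y) ≤ α * dist (g x) (g y))
    (hdir : ∀ x y : X, ∃ z : X, Cmp (f x) (g z) ∧ Cmp (f y) (g z)) :
    ∃! x : X, g x = x ∧ f x = x := by
  obtain ⟨α, hα₀, hα₁, hc⟩ := h7
  obtain ⟨x₀, hx₀⟩ := h6
  obtain ⟨z, hz⟩ := exists_coincidence h1 h2 h3 h4 h5 hx₀ hα₀ hα₁ hc
  exact existsUnique_common_fixedPoint hz (fun _ => h3.commute_of_coincidence)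
    (fun _ _ => eq_of_coincidence_of_directed h1 h2 hα₀ hα₁ hc hdir)
end

section
/- Let (X, d, ≤) be an ordered metric space with (X, d) complete, and let f be a self-map on X such that: (a) f is comparable; (b) either f is continuous or (X, d, ≤) has the TCC property; (c) there exists x₀ ∈ X with x₀ ≺≻ f(x₀); (d) there exists α ∈ [0,1) such that d(f(x), f(y)) ≤ α·d(x, y) for all x, y ∈ X with x ≺≻ y; (e) for each x, y ∈ X, the set C(f(x), f(y), ≺≻) of ≺≻-chains between f(x) and f(y) in X is nonempty. Then f has a unique fixed point. -/
/-!
Since `f` maps comparable pairs to comparable pairs, the Picard orbit of `x₀` consists of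
consecutive comparable points, so the contraction along comparable pairs makes it a geometric
Cauchy sequence. Its limit is fixed: by continuity, or, under TCC, because a subsequence of the
orbit is comparable to the limit, where `f` is again contracting. For uniqueness, join two fixed
points by a `≺≻`-chain; the `n`-th iterate of `f` shrinks every link by `α ^ n` and fixes both
ends, so their distance is at most `α ^ n` times the length of the chain.
-/

open Filter Topology

open Function

section

variable {X : Type*} [PartialOrder X] {f : X → X}

theorem Cmp.iterate (hf : ∀ x y, Cmp x y → Cmp (f x) (f y)) {x y : X} (h : Cmp x y) (n : ℕ) :
    Cmp (f^[n] x) (f^[n] y) := by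
  induction n with
  | zero => exact h
  | succ n ih =>
    rw [iterate_succ_apply', iterate_succ_apply']
    exact hf _ _ ih

theorem cmp_iterate_succ (hf : ∀ x y, Cmp x y → Cmp (f x) (f y)) {x₀ : X} (hx₀ : Cmp x₀ (f x₀))
    (n : ℕ) : Cmp (f^[n] x₀) (f^[n + 1] x₀) := by
  rw [iterate_succ_apply]
  exact hx₀.iterate hf n

variable [MetricSpace X] {α : ℝ}

theorem dist_iterate_le_of_cmp (hf : ∀ x y, Cmp x y → Cmp (f x) (f y))
    (hcon : ∀ x y, Cmp x y → dist (f x) (f y) ≤ α * dist x y) (hα : 0 ≤ α)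
    {x y : X} (h : Cmp x y) (n : ℕ) :
    dist (f^[n] x) (f^[n] y) ≤ α ^ n * dist x y := by
  induction n with
  | zero => simp
  | succ n ih =>
    rw [iterate_succ_apply', iterate_succ_apply']
    calc dist (f (f^[n] x)) (f (f^[n] y)) ≤ α * dist (f^[n] x) (f^[n] y) :=
          hcon _ _ (h.iterate hf n)
      _ ≤ α * (α ^ n * dist x y) := mul_le_mul_of_nonneg_left ih hα
      _ = α ^ (n + 1) * dist x y := by ring

theorem cauchySeq_iterate_of_cmp (hf : ∀ x y, Cmp x y → Cmp (f x) (f y))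
    (hcon : ∀ x y, Cmp x y → dist (f x) (f y) ≤ α * dist x y) (hα0 : 0 ≤ α) (hα1 : α < 1)
    {x₀ : X} (hx₀ : Cmp x₀ (f x₀)) : CauchySeq fun n => f^[n] x₀ := by
  refine cauchySeq_of_le_geometric α (dist x₀ (f x₀)) hα1 fun n => ?_
  rw [iterate_succ_apply, mul_comm]
  exact dist_iterate_le_of_cmp hf hcon hα0 hx₀ n

theorem tendsto_comp_of_cmp (hcon : ∀ x y, Cmp x y → dist (f x) (f y) ≤ α * dist x y)
    {v : ℕ → X} {l : X} (hv : Tendsto v atTop (𝓝 l)) (hvl : ∀ k, Cmp (v k) l) :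
    Tendsto (f ∘ v) atTop (𝓝 (f l)) := by
  have hα : Tendsto (fun k => α * dist (v k) l) atTop (𝓝 0) := by
    simpa using (tendsto_iff_dist_tendsto_zero.mp hv).const_mul α
  exact tendsto_iff_dist_tendsto_zero.mpr
    (squeeze_zero (fun _ => dist_nonneg) (fun k => hcon _ _ (hvl k)) hα)

theorem isFixedPt_of_tendsto_iterate_of_tcc (hX : TCC X)
    (hf : ∀ x y, Cmp x y → Cmp (f x) (f y))
    (hcon : ∀ x y, Cmp x y → dist (f x) (f y) ≤ α * dist x y)
    {x₀ l : X} (hx₀ : Cmp x₀ (f x₀)) (hl : Tendsto (fun n => f^[n] x₀) atTop (𝓝 l)) :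
    IsFixedPt f l := by
  obtain ⟨φ, hφ, hφl⟩ := hX _ l (cmp_iterate_succ hf hx₀) hl
  have hsub : Tendsto (fun k => f^[φ k] x₀) atTop (𝓝 l) := hl.comp hφ.tendsto_atTop
  have hsucc : Tendsto (fun k => f^[φ k + 1] x₀) atTop (𝓝 l) :=
    (tendsto_add_atTop_iff_nat 1).2 hl |>.comp hφ.tendsto_atTop
  simp only [iterate_succ_apply'] at hsucc
  exact tendsto_nhds_unique (tendsto_comp_of_cmp hcon hsub hφl) hsucc

theorem ChainIn.exists_dist_iterate_le {E : Set X} {a b : X} (h : ChainIn E a b)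
    (hf : ∀ x y, Cmp x y → Cmp (f x) (f y))
    (hcon : ∀ x y, Cmp x y → dist (f x) (f y) ≤ α * dist x y) (hα : 0 ≤ α) :
    ∃ C, ∀ n, dist (f^[n] a) (f^[n] b) ≤ α ^ n * C := by
  obtain ⟨k, e, -, -, rfl, rfl, he⟩ := h
  refine ⟨∑ i ∈ Finset.range (k - 1), dist (e i) (e (i + 1)), fun n => ?_⟩
  calc dist (f^[n] (e 0)) (f^[n] (e (k - 1)))
      ≤ ∑ i ∈ Finset.range (k - 1), dist (f^[n] (e i)) (f^[n] (e (i + 1))) :=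
        dist_le_range_sum_dist (fun i => f^[n] (e i)) (k - 1)
    _ ≤ ∑ i ∈ Finset.range (k - 1), α ^ n * dist (e i) (e (i + 1)) := by
        refine Finset.sum_le_sum fun i hi => dist_iterate_le_of_cmp hf hcon hα (he i ?_) n
        have := Finset.mem_range.mp hi
        omega
    _ = α ^ n * ∑ i ∈ Finset.range (k - 1), dist (e i) (e (i + 1)) := by
        rw [Finset.mul_sum]

theorem ChainIn.eq_of_isFixedPt {E : Set X} {x y : X} (h : ChainIn E x y)
    (hf : ∀ x y, Cmp x y → Cmp (f x) (f y))
    (hcon : ∀ x y, Cmp x y → dist (f x) (f y) ≤ α * dist x y) (hα0 : 0 ≤ α) (hα1 : α < 1)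
    (hx : IsFixedPt f x) (hy : IsFixedPt f y) : x = y := by
  obtain ⟨C, hC⟩ := h.exists_dist_iterate_le hf hcon hα0
  have hlim : Tendsto (fun n => α ^ n * C) atTop (𝓝 0) := by
    simpa using (tendsto_pow_atTop_nhds_zero_of_lt_one hα0 hα1).mul_const C
  refine dist_le_zero.mp (ge_of_tendsto' hlim fun n => ?_)
  simpa only [(hx.iterate n).eq, (hy.iterate n).eq] using hC n

end

/-- Corollary 5.1, uniqueness part. -/
theorem stmt13 {X : Type*} [MetricSpace X] [PartialOrder X] [CompleteSpace X]
    (f : X → X)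
    (ha : ∀ x y : X, Cmp x y → Cmp (f x) (f y))
    (hb : Continuous f ∨ TCC X)
    (hc : ∃ x₀ : X, Cmp x₀ (f x₀))
    (hd : ∃ α : ℝ, 0 ≤ α ∧ α < 1 ∧
      ∀ x y : X, Cmp x y → dist (f x) (f y) ≤ α * dist x y)
    (he : ∀ x y : X, ChainIn (Set.univ : Set X) (f x) (f y)) :
    ∃! x : X, f x = x := by
  obtain ⟨α, hα0, hα1, hcon⟩ := hd
  obtain ⟨x₀, hx₀⟩ := hc
  obtain ⟨x, hx⟩ :=
    cauchySeq_tendsto_of_complete (cauchySeq_iterate_of_cmp ha hcon hα0 hα1 hx₀)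
  have hfx : IsFixedPt f x := by
    rcases hb with hcont | htcc
    · exact isFixedPt_of_tendsto_iterate hx hcont.continuousAt
    · exact isFixedPt_of_tendsto_iterate_of_tcc htcc ha hcon hx₀ hx
  refine ⟨x, hfx, fun y hy => ?_⟩
  have hchain := he y x
  rw [hy, hfx.eq] at hchain
  exact hchain.eq_of_isFixedPt ha hcon hα0 hα1 hy hfx
end
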